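/- arXiv:1303.7054 — 7 statements merged into one kernel-verified Lean document; each statement's English description precedes it below -/
import Mathlib

section
/- Let n ≥ 1 be an integer. Suppose that for every integer D ≥ 1 there exist a natural number W_D and functions T_D, R_D : Fin n → ℕ such that W_D = T_D i + R_D i for every i, R_D i ≥ D for every i, and ∑ i, T_D i ≥ D. Then limsup_{D → ∞} (D : ℝ) / (W_D : ℝ) ≤ n / (n + 1). -/
open Filter

/-- Theorem 1 of the paper stated in terms of throughput:
`limsup_{D → ∞} D / W_D ≤ n / (n + 1)` under the half-duplex, decoding, and
cut-crossing constraints. -/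
theorem stmt_1 (n : ℕ) (hn : 1 ≤ n) (W : ℕ → ℕ)
    (h : ∀ D : ℕ, 1 ≤ D → ∃ T R : Fin n → ℕ,
      (∀ i, W D = T i + R i) ∧ (∀ i, D ≤ R i) ∧ D ≤ ∑ i, T i) :
    Filter.limsup (fun D : ℕ => (D : ℝ) / (W D : ℝ)) Filter.atTop
      ≤ (n : ℝ) / ((n : ℝ) + 1) := by
  have key : ∀ D : ℕ, 1 ≤ D → (D : ℝ) / (W D : ℝ) ≤ (n : ℝ) / ((n : ℝ) + 1) := by
    intro D hD
    obtain ⟨T, R, h1, h2, h3⟩ := h D hD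
    have hne : Nonempty (Fin n) := ⟨⟨0, hn⟩⟩
    -- n * W D = ∑ T + ∑ R ≥ D + n * D
    have hsum : (n + 1) * D ≤ n * W D := by
      have : n * W D = (∑ i, T i) + ∑ i, R i := by
        rw [← Finset.sum_add_distrib]
        simp [← h1, Finset.sum_const, mul_comm]
      rw [this]
      have hR : n * D ≤ ∑ i, R i := by
        calc n * D = ∑ _i : Fin n, D := by simp [mul_comm]
        _ ≤ ∑ i, R i := Finset.sum_le_sum fun i _ => h2 i
      nlinarith
    have hWpos : 0 < W D := by
      have := h1 ⟨0, hn⟩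
      have := h2 ⟨0, hn⟩
      omega
    have hWpos' : (0 : ℝ) < (W D : ℝ) := by exact_mod_cast hWpos
    have hnpos : (0 : ℝ) < (n : ℝ) + 1 := by positivity
    rw [div_le_div_iff₀ hWpos' hnpos]
    have : ((n + 1) * D : ℝ) ≤ (n * W D : ℝ) := by exact_mod_cast hsum
    push_cast at this
    nlinarith
  have hbdd : IsCoboundedUnder (· ≤ ·) atTop (fun D : ℕ => (D : ℝ) / (W D : ℝ)) := by
    apply isCoboundedUnder_le_of_eventually_le atTop (x := 0)
    filter_upwards with D
    positivity
  apply limsup_le_of_le hbdd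
  exact eventually_atTop.2 ⟨1, fun D hD => key D hD⟩
end

section
/- Let k ≥ 1 and D ≥ 1 be integers, let G : Fin k → ℕ be weights, and set n_f := ∑ c, G c; assume n_f ≥ 1. Suppose W is a natural number and T, R : Fin k → ℕ satisfy: W = T c + R c for every c; R c ≥ D for every c; and ∑ c, (T c) · (G c) ≥ D. Then (n_f + 1) · D ≤ n_f · W. -/
/-- Arithmetic core of Theorem 2 (throughput upper bound under color-based
scheduling): with color-group cut sizes `G c` and color-cut size
`n_f = ∑ c, G c`, the constraints `W = T c + R c`, `R c ≥ D`, and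
`∑ c, T c * G c ≥ D` imply `(n_f + 1) * D ≤ n_f * W`. -/
theorem stmt_3 (k D W : ℕ) (hk : 1 ≤ k) (hD : 1 ≤ D)
    (G : Fin k → ℕ) (hnf : 1 ≤ ∑ c, G c)
    (T R : Fin k → ℕ)
    (hW : ∀ c, W = T c + R c)
    (hR : ∀ c, D ≤ R c)
    (hT : D ≤ ∑ c, T c * G c) :
    ((∑ c, G c) + 1) * D ≤ (∑ c, G c) * W := by
  obtain ⟨c0⟩ : Nonempty (Fin k) := ⟨⟨0, hk⟩⟩
  have hWD : D ≤ W := by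
    have := hR c0; have := hW c0; omega
  have hTc : ∀ c, T c ≤ W - D := fun c => by
    have := hR c; have := hW c; omega
  have hsum : D ≤ (W - D) * ∑ c, G c := by
    calc D ≤ ∑ c, T c * G c := hT
    _ ≤ ∑ c, (W - D) * G c :=
      Finset.sum_le_sum fun c _ => Nat.mul_le_mul_right _ (hTc c)
    _ = (W - D) * ∑ c, G c := by rw [Finset.mul_sum]
  have : (∑ c, G c) * W = (∑ c, G c) * D + (∑ c, G c) * (W - D) := by
    rw [← Nat.mul_add]; congr 1; omega
  rw [this, add_mul, one_mul]
  exact Nat.add_le_add_left (by linarith [hsum]) _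
end

section
/- Let k ≥ 1 be an integer, let G : Fin k → ℝ be weights with G c ≥ 0 for all c and n_f := ∑ c, G c > 0, and let D > 0 be a real number. Then n_f / (n_f + 1) is the greatest element of the set { min_{c : Fin k} D / (T c + D) | T : Fin k → ℝ, (∀ c, T c ≥ 0) ∧ ∑ c, (T c) · (G c) ≥ D }. In particular: (a) for every such feasible T there exists c with D / (T c + D) ≤ n_f / (n_f + 1); and (b) the constant assignment T c = D / n_f is feasible and attains min_c D / (T c + D) = n_f / (n_f + 1). -/
/-- The optimization problem inside the proof of Theorem 2:
with weights `G c ≥ 0` summing to `n_f > 0`, `n_f / (n_f + 1)` is the greatest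
value of `min_c D / (T c + D)` over nonnegative `T` with `∑ c, T c * G c ≥ D`.
In particular, (a) every feasible `T` has some `c` with
`D / (T c + D) ≤ n_f / (n_f + 1)`, and (b) the constant assignment
`T c = D / n_f` is feasible and attains `min_c D / (T c + D) = n_f / (n_f + 1)`. -/
theorem stmt_4 (k : ℕ) (hk : 1 ≤ k) (G : Fin k → ℝ)
    (hG : ∀ c, 0 ≤ G c) (hnf : 0 < ∑ c, G c) (D : ℝ) (hD : 0 < D) :
    IsGreatest
      { y : ℝ | ∃ T : Fin k → ℝ, ((∀ c, 0 ≤ T c) ∧ D ≤ ∑ c, T c * G c) ∧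
          y = ⨅ c, D / (T c + D) }
      ((∑ c, G c) / ((∑ c, G c) + 1))
    ∧ (∀ T : Fin k → ℝ, (∀ c, 0 ≤ T c) → D ≤ ∑ c, T c * G c →
        ∃ c : Fin k, D / (T c + D) ≤ (∑ c, G c) / ((∑ c, G c) + 1))
    ∧ ((∀ _c : Fin k, (0 : ℝ) ≤ D / (∑ c, G c)) ∧
        D ≤ ∑ c, (D / (∑ c', G c')) * G c ∧
        (⨅ _c : Fin k, D / (D / (∑ c, G c) + D)) = (∑ c, G c) / ((∑ c, G c) + 1)) := by
  have hne : Nonempty (Fin k) := ⟨⟨0, hk⟩⟩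
  set n := ∑ c, G c with hn
  have hn1 : (0:ℝ) < n + 1 := by linarith
  have hval : D / (D / n + D) = n / (n + 1) := by
    rw [div_eq_div_iff (by positivity) hn1.ne']
    field_simp
    ring
  have hsumD : ∑ c, (D / n) * G c = D := by
    rw [← Finset.mul_sum, ← hn]
    field_simp
  have key : ∀ T : Fin k → ℝ, (∀ c, 0 ≤ T c) → D ≤ ∑ c, T c * G c →
      ∃ c, D / (T c + D) ≤ n / (n + 1) := by
    intro T hT hsum
    by_contra h
    push_neg at h
    have hTc : ∀ c, T c < D / n := by
      intro c
      have hpos : 0 < T c + D := by linarith [hT c]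
      have hc := h c
      rw [div_lt_div_iff₀ hn1 hpos] at hc
      rw [lt_div_iff₀ hnf]
      nlinarith
    obtain ⟨c0, hc0⟩ : ∃ c, 0 < G c := by
      by_contra hno; push_neg at hno
      have : ∑ c, G c ≤ 0 := Finset.sum_nonpos (fun c _ => hno c)
      linarith
    have hstrict : ∑ c, T c * G c < ∑ c, (D / n) * G c :=
      Finset.sum_lt_sum (fun c _ => mul_le_mul_of_nonneg_right (hTc c).le (hG c))
        ⟨c0, Finset.mem_univ c0, mul_lt_mul_of_pos_right (hTc c0) hc0⟩
    rw [hsumD] at hstrict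
    linarith
  refine ⟨⟨⟨fun _ => D / n, ⟨fun _ => by positivity, hsumD.ge⟩, ?_⟩, ?_⟩, ?_, ?_, hsumD.ge, ?_⟩
  · rw [ciInf_const, hval]
  · rintro y ⟨T, ⟨hT, hsum⟩, rfl⟩
    obtain ⟨c, hc⟩ := key T hT hsum
    exact le_trans (ciInf_le (Finite.bddBelow_range _) c) hc
  · exact key
  · intro _; positivity
  · rw [ciInf_const, hval]
end

section
/- Let k ≥ 1 be an integer and G : Fin k → ℕ weights with n_f := ∑ c, G c ≥ 1. Suppose that for every integer D ≥ 1 there exist a natural number W_D and functions T_D, R_D : Fin k → ℕ such that W_D = T_D c + R_D c for every c, R_D c ≥ D for every c, and ∑ c, (T_D c) · (G c) ≥ D. Then limsup_{D → ∞} (D : ℝ) / (W_D : ℝ) ≤ n_f / (n_f + 1). -/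
open Filter

/-- Theorem 2 of the paper stated in terms of throughput: under color-based
scheduling with color-group cut sizes `G c` and color-cut size
`n_f = ∑ c, G c`, the broadcast throughput satisfies
`limsup_{D → ∞} D / W_D ≤ n_f / (n_f + 1)`. -/
theorem stmt_5 (k : ℕ) (hk : 1 ≤ k) (G : Fin k → ℕ) (hnf : 1 ≤ ∑ c, G c)
    (W : ℕ → ℕ)
    (h : ∀ D : ℕ, 1 ≤ D → ∃ T R : Fin k → ℕ,
      (∀ c, W D = T c + R c) ∧ (∀ c, D ≤ R c) ∧ D ≤ ∑ c, T c * G c) :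
    Filter.limsup (fun D : ℕ => (D : ℝ) / (W D : ℝ)) Filter.atTop
      ≤ ((∑ c, G c : ℕ) : ℝ) / (((∑ c, G c : ℕ) : ℝ) + 1) := by
  set n := ∑ c, G c with hn
  have key : ∀ᶠ (D : ℕ) in atTop, (D : ℝ) / (W D : ℝ) ≤ (n : ℝ) / ((n : ℝ) + 1) := by
    filter_upwards [eventually_ge_atTop 1] with D hD
    obtain ⟨T, R, hW, hR, hsum⟩ := h D hD
    have c0 : Fin k := ⟨0, hk⟩
    have hWD : D ≤ W D := (hR c0).trans (by rw [hW c0]; omega)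
    -- T c ≤ W D - D for each c
    have hT : ∀ c, T c ≤ W D - D := fun c => by have := hW c; have := hR c; omega
    have hDm : D ≤ (W D - D) * n := by
      calc D ≤ ∑ c, T c * G c := hsum
        _ ≤ ∑ c, (W D - D) * G c :=
            Finset.sum_le_sum fun c _ => Nat.mul_le_mul_right _ (hT c)
        _ = (W D - D) * n := by rw [← Finset.mul_sum]
    have hmain : D * (n + 1) ≤ W D * n := by
      have hWeq : W D = (W D - D) + D := by omega
      calc D * (n + 1) = D * n + D := by ring
        _ ≤ D * n + (W D - D) * n := by omega
        _ = ((W D - D) + D) * n := by ring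
        _ = W D * n := by rw [← hWeq]
    have hWpos : 0 < W D := lt_of_lt_of_le hD hWD
    rw [div_le_div_iff₀ (by exact_mod_cast hWpos) (by positivity)]
    have : (D : ℝ) * ((n : ℝ) + 1) ≤ (W D : ℝ) * n := by exact_mod_cast hmain
    linarith
  refine limsup_le_of_le ?_ key
  refine ⟨0, ?_⟩
  intro b hb
  obtain ⟨D, hD⟩ := (eventually_map.mp hb).exists
  exact le_trans (by positivity) hD
end

section
/- Let W ≥ 1 be a natural number. There do not exist finite sets A, B, C, E, T₁ ⊆ Fin W such that all of the following hold: 3·|A| ≤ W, 3·|B| ≤ W, 3·|C| ≤ W, 3·|E| ≤ W, 3·|T₁| ≤ W, 3·|(A ∪ B) \ T₁| ≥ 2·W, 3·|(A ∪ E) \ C| ≥ 2·W, and 3·|(B ∪ C) \ E| ≥ 2·W. -/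
/-- Appendix A of the paper: throughput 2/3 is not achievable in the network of
Fig. 4.  Over `W` time slots, with `A, B, C, E, T₁` the transmit-slot sets of
nodes `X₀, X₁, 2, 3, 1`, the stated constraints are jointly contradictory. -/
theorem stmt_6 (W : ℕ) (hW : 1 ≤ W) :
    ¬ ∃ A B C E T₁ : Finset (Fin W),
      3 * A.card ≤ W ∧ 3 * B.card ≤ W ∧ 3 * C.card ≤ W ∧ 3 * E.card ≤ W ∧
      3 * T₁.card ≤ W ∧
      2 * W ≤ 3 * ((A ∪ B) \ T₁).card ∧
      2 * W ≤ 3 * ((A ∪ E) \ C).card ∧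
      2 * W ≤ 3 * ((B ∪ C) \ E).card := by
  rintro ⟨A, B, C, E, T₁, hA, hB, hC, hE, hT, h1, h2, h3⟩
  -- basic size bounds
  have s1 : ((A ∪ B) \ T₁).card ≤ (A ∪ B).card := Finset.card_le_card (Finset.sdiff_subset)
  have s2 : ((A ∪ E) \ C).card ≤ (A ∪ E).card := Finset.card_le_card (Finset.sdiff_subset)
  have s3 : ((B ∪ C) \ E).card ≤ (B ∪ C).card := Finset.card_le_card (Finset.sdiff_subset)
  have u1 : (A ∪ B).card ≤ A.card + B.card := Finset.card_union_le _ _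
  have u2 : (A ∪ E).card ≤ A.card + E.card := Finset.card_union_le _ _
  have u3 : (B ∪ C).card ≤ B.card + C.card := Finset.card_union_le _ _
  -- exact cardinalities
  have cA : 3 * A.card = W := by omega
  have cB : 3 * B.card = W := by omega
  have cC : 3 * C.card = W := by omega
  have cE : 3 * E.card = W := by omega
  -- disjointness facts via card_union_add_card_inter
  have i1 : (A ∪ B).card + (A ∩ B).card = A.card + B.card :=
    Finset.card_union_add_card_inter A B
  have i3 : (B ∪ C).card + (B ∩ C).card = B.card + C.card :=
    Finset.card_union_add_card_inter B C
  have hAB : (A ∩ B).card = 0 := by omega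
  have hBC : (B ∩ C).card = 0 := by omega
  -- (B∪C) ∩ E has card 0
  have j3 : ((B ∪ C) \ E).card + ((B ∪ C) ∩ E).card = (B ∪ C).card :=
    Finset.card_sdiff_add_card_inter _ _
  have hBCE : ((B ∪ C) ∩ E).card = 0 := by omega
  have hBE : (B ∩ E).card = 0 := by
    have : B ∩ E ⊆ (B ∪ C) ∩ E :=
      Finset.inter_subset_inter (Finset.subset_union_left) (le_refl E)
    have := Finset.card_le_card this
    omega
  -- A ∪ E ∪ C covers everything
  have d2 : Disjoint ((A ∪ E) \ C) C := Finset.sdiff_disjoint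
  have cov : (((A ∪ E) \ C) ∪ C).card = ((A ∪ E) \ C).card + C.card :=
    Finset.card_union_of_disjoint d2
  have covle : (((A ∪ E) \ C) ∪ C).card ≤ (A ∪ E ∪ C).card := by
    apply Finset.card_le_card
    intro x hx
    simp only [Finset.mem_union, Finset.mem_sdiff] at hx ⊢
    tauto
  have hWle : W ≤ (A ∪ E ∪ C).card := by omega
  have huniv : (A ∪ E ∪ C) = Finset.univ := by
    apply Finset.eq_univ_of_card
    have : (A ∪ E ∪ C).card ≤ Fintype.card (Fin W) := Finset.card_le_univ _
    simp only [Fintype.card_fin] at this ⊢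
    omega
  -- B is covered by A, E, C but disjoint from each
  have hsub : B ⊆ (B ∩ A) ∪ (B ∩ E) ∪ (B ∩ C) := by
    intro x hx
    have hx2 : x ∈ A ∪ E ∪ C := huniv ▸ Finset.mem_univ x
    simp only [Finset.mem_union, Finset.mem_inter] at hx2 ⊢
    tauto
  have hle := Finset.card_le_card hsub
  have h4 : ((B ∩ A) ∪ (B ∩ E) ∪ (B ∩ C)).card ≤ (B ∩ A).card + (B ∩ E).card + (B ∩ C).card :=
    le_trans (Finset.card_union_le _ _) (by
      have := Finset.card_union_le (B ∩ A) (B ∩ E); omega)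
  have hBA : (B ∩ A).card = 0 := by rw [Finset.inter_comm]; exact hAB
  omega
end

section
/- Let s ≥ 1 and let F = GF(2^s). Let σ be a finite type of variables with |σ| = m ≥ 1, let R ≥ 1 and L ≥ 1 be integers, and for each i : Fin L let d_i : σ →₀ ℕ satisfy ∑_x d_i(x) = R and d_i(x) ≤ 2 for every x, and let Q_i := monomial d_i 1 ∈ MvPolynomial σ F. Suppose d_0(x) ≤ 1 for every x and d_i ≠ d_0 for every i ≠ 0, and let p := ∑_{i : Fin L} Q_i. Then the number of assignments v : σ → F with v x ≠ 0 for every x and eval v p = 0 is at most R · (2^s − 1)^(m − 1). Equivalently, if the variables are assigned i.i.d. uniform values from F \ {0}, then Pr(p evaluates to 0) ≤ R / (2^s − 1). -/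
/-!
The monomial of `Q_j` is hit by no other `Q_i`, so its coefficient in `p` is `1` and `p ≠ 0`;
also `deg p ≤ R`. The Schwartz–Zippel lemma, applied on the `2^s - 1` nonzero elements of the
field, then bounds the number of nonzero zeros of `p`.
-/

open MvPolynomial Finset

namespace MvPolynomial

theorem coeff_sum_monomial_of_ne {ι R : Type*} [Fintype ι] [CommSemiring R]
    {σ : Type*} (d : ι → σ →₀ ℕ) (c : ι → R) {j : ι} (hne : ∀ i, i ≠ j → d i ≠ d j) :
    coeff (d j) (∑ i, monomial (d i) (c i)) = c j := by
  classical
  rw [coeff_sum, Finset.sum_eq_single j (fun i _ hi ↦ by simp [coeff_monomial, hne i hi]) (by simp)]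
  simp [coeff_monomial]

variable {σ R : Type*} [Fintype σ] [CommRing R] [IsDomain R]

theorem card_zeros_mul_card_le [DecidableEq R] {n : ℕ} {p : MvPolynomial (Fin n) R} (hp : p ≠ 0)
    (S : Finset R) :
    #{f ∈ Fintype.piFinset fun _ ↦ S | eval f p = 0} * #S ≤ p.totalDegree * #S ^ n := by
  rcases S.eq_empty_or_nonempty with rfl | hS
  · simp
  have h := schwartz_zippel_totalDegree hp S
  rw [div_le_div_iff₀ (by positivity) (by positivity)] at h
  exact_mod_cast h

theorem ncard_zeros_mul_card_le {p : MvPolynomial σ R} (hp : p ≠ 0) (S : Finset R) :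
    {v : σ → R | (∀ x, v x ∈ S) ∧ eval v p = 0}.ncard * #S ≤
      p.totalDegree * #S ^ Fintype.card σ := by
  classical
  let e : σ ≃ Fin (Fintype.card σ) := Fintype.equivFin σ
  have himage : (fun v ↦ v ∘ e.symm) '' {v : σ → R | (∀ x, v x ∈ S) ∧ eval v p = 0} =
      ↑({f ∈ Fintype.piFinset fun _ ↦ S | eval f (rename e p) = 0} :
        Finset (Fin (Fintype.card σ) → R)) := by
    ext f
    simp only [Set.mem_image, Set.mem_ofPred_eq, coe_filter, Fintype.mem_piFinset, eval_rename]
    constructor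
    · rintro ⟨v, ⟨hvS, hv⟩, rfl⟩
      exact ⟨fun i ↦ hvS _, by simpa [Function.comp_assoc] using hv⟩
    · rintro ⟨hfS, hf⟩
      exact ⟨f ∘ e, ⟨fun x ↦ hfS _, hf⟩, by simp [Function.comp_assoc]⟩
  have hinj : Function.Injective fun v : σ → R ↦ v ∘ e.symm :=
    (e.arrowCongr (Equiv.refl R)).injective
  rw [← Set.ncard_image_of_injective _ hinj, himage, Set.ncard_coe_finset]
  calc _ ≤ (rename e p).totalDegree * #S ^ Fintype.card σ :=
        card_zeros_mul_card_le ((rename_injective e e.injective).ne hp |>.trans_eq (map_zero _)) S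
    _ ≤ p.totalDegree * #S ^ Fintype.card σ := by gcongr; exact totalDegree_rename_le _ _

theorem ncard_nonzero_zeros_le {F : Type*} [Field F] [Finite F] {p : MvPolynomial σ F}
    (hp : p ≠ 0) :
    {v : σ → F | (∀ x, v x ≠ 0) ∧ eval v p = 0}.ncard ≤
      p.totalDegree * (Nat.card F - 1) ^ (Fintype.card σ - 1) := by
  classical
  have : Fintype F := Fintype.ofFinite F
  rcases Nat.eq_zero_or_eq_succ_pred (Fintype.card σ) with hσ | hσ
  · have : IsEmpty σ := Fintype.card_eq_zero_iff.mp hσ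
    have hnonzero (v : σ → F) : eval v p ≠ 0 := by
      rw [p.eq_C_of_isEmpty, eval_C]
      exact fun h ↦ hp (by rw [p.eq_C_of_isEmpty, h, C_0])
    simp [hnonzero]
  · have hcard : #(univ.erase (0 : F)) = Nat.card F - 1 := by
      rw [card_erase_of_mem (mem_univ _), card_univ, Nat.card_eq_fintype_card]
    have key := ncard_zeros_mul_card_le hp (univ.erase (0 : F))
    simp only [mem_erase, mem_univ, and_true, hcard] at key
    rw [hσ, pow_succ, ← mul_assoc] at key
    exact Nat.le_of_mul_le_mul_right key (by have := Finite.one_lt_card (α := F); omega)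

end MvPolynomial

theorem stmt_8_general (s : ℕ) (hs : 1 ≤ s) (σ : Type*) [Fintype σ] (m : ℕ)
    (hm : Fintype.card σ = m)
    (R L : ℕ) (hL : 0 < L)
    (d : Fin L → (σ →₀ ℕ))
    (hdeg : ∀ i : Fin L, ((d i).sum fun _ e => e) = R)
    (hne : ∀ i : Fin L, i ≠ ⟨0, hL⟩ → d i ≠ d ⟨0, hL⟩) :
    {v : σ → GaloisField 2 s | (∀ x, v x ≠ 0) ∧
        MvPolynomial.eval v
          (∑ i : Fin L, MvPolynomial.monomial (d i) (1 : GaloisField 2 s)) = 0}.ncard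
      ≤ R * (2 ^ s - 1) ^ (m - 1) := by
  set p : MvPolynomial σ (GaloisField 2 s) := ∑ i, monomial (d i) 1
  have hp : p ≠ 0 := ne_zero_iff.mpr
    ⟨d ⟨0, hL⟩, by rw [coeff_sum_monomial_of_ne d _ hne]; exact one_ne_zero⟩
  have hp_deg : p.totalDegree ≤ R := (totalDegree_finsetSum _ _).trans <|
    Finset.sup_le fun i _ ↦ (totalDegree_monomial_le _ _).trans (hdeg i).le
  calc _ ≤ p.totalDegree * (Nat.card (GaloisField 2 s) - 1) ^ (Fintype.card σ - 1) :=
        ncard_nonzero_zeros_le hp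
    _ ≤ R * (2 ^ s - 1) ^ (m - 1) := by
        rw [GaloisField.card 2 s (by omega), hm]
        gcongr

/-- Lemma 4 of the paper: over `F = GF(2^s)`, for the polynomial
`p = ∑ i, monomial (d i) 1` as in Lemma 3, the number of assignments
`v : σ → F` with all values nonzero annihilating `p` is at most
`R * (2^s - 1)^(m - 1)`, i.e. the probability of evaluating to zero under
i.i.d. uniform nonzero values is at most `R / (2^s - 1)`. -/
theorem stmt_8 (s : ℕ) (hs : 1 ≤ s) (σ : Type*) [Fintype σ] (m : ℕ)
    (hm : Fintype.card σ = m) (hm1 : 1 ≤ m)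
    (R L : ℕ) (hR : 1 ≤ R) (hL : 0 < L)
    (d : Fin L → (σ →₀ ℕ))
    (hdeg : ∀ i : Fin L, ((d i).sum fun _ e => e) = R)
    (hle2 : ∀ (i : Fin L) (x : σ), d i x ≤ 2)
    (h0 : ∀ x : σ, d ⟨0, hL⟩ x ≤ 1)
    (hne : ∀ i : Fin L, i ≠ ⟨0, hL⟩ → d i ≠ d ⟨0, hL⟩) :
    {v : σ → GaloisField 2 s | (∀ x, v x ≠ 0) ∧
        MvPolynomial.eval v
          (∑ i : Fin L, MvPolynomial.monomial (d i) (1 : GaloisField 2 s)) = 0}.ncard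
      ≤ R * (2 ^ s - 1) ^ (m - 1) :=
  stmt_8_general s hs σ m hm R L hL d hdeg hne
end

section
/- Let s ≥ 1 and let F = GF(2^s). Let σ be a finite type of variables with |σ| = m ≥ 1, let R and L ≥ 1 be integers with 1 ≤ R < 2^s − 1, and for each i : Fin L let d_i : σ →₀ ℕ satisfy ∑_x d_i(x) = R and d_i(x) ≤ 2 for every x, and let Q_i := monomial d_i 1 ∈ MvPolynomial σ F. Suppose d_0(x) ≤ 1 for every x and d_i ≠ d_0 for every i ≠ 0. Then there exists an assignment v : σ → F with v x ≠ 0 for every x such that eval v (∑_{i : Fin L} Q_i) ≠ 0. -/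
/-- Consequence of the paper's Lemmas 3 and 4: if `R < 2^s - 1`, then some
assignment of nonzero values of `GF(2^s)` to the variables makes the polynomial
`∑ i, monomial (d i) 1` evaluate to a nonzero value. -/
theorem stmt_9 (s : ℕ) (hs : 1 ≤ s) (σ : Type*) [Fintype σ] (m : ℕ)
    (hm : Fintype.card σ = m) (hm1 : 1 ≤ m)
    (R L : ℕ) (hR : 1 ≤ R) (hR' : R < 2 ^ s - 1) (hL : 0 < L)
    (d : Fin L → (σ →₀ ℕ))
    (hdeg : ∀ i : Fin L, ((d i).sum fun _ e => e) = R)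
    (hle2 : ∀ (i : Fin L) (x : σ), d i x ≤ 2)
    (h0 : ∀ x : σ, d ⟨0, hL⟩ x ≤ 1)
    (hne : ∀ i : Fin L, i ≠ ⟨0, hL⟩ → d i ≠ d ⟨0, hL⟩) :
    ∃ v : σ → GaloisField 2 s, (∀ x, v x ≠ 0) ∧
      MvPolynomial.eval v
        (∑ i : Fin L, MvPolynomial.monomial (d i) (1 : GaloisField 2 s)) ≠ 0 := by
  classical
  set K := GaloisField 2 s with hK
  haveI : Fintype K := Fintype.ofFinite _
  have hcard : Fintype.card K = 2 ^ s := by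
    rw [← Nat.card_eq_fintype_card]
    exact GaloisField.card 2 s (by omega)
  -- s ≥ 2, so 2^s ≥ 4
  have hs2 : 2 ≤ s := by
    rcases s with _ | _ | s
    · omega
    · simp at hR'; omega
    · omega
  have h4 : 4 ≤ 2 ^ s := by
    calc (4 : ℕ) = 2 ^ 2 := by norm_num
    _ ≤ 2 ^ s := Nat.pow_le_pow_right (by norm_num) hs2
  set P : MvPolynomial σ K := ∑ i : Fin L, MvPolynomial.monomial (d i) 1 with hPdef
  have hP0 : P ≠ 0 := by
    intro h
    have hc := congrArg (MvPolynomial.coeff (d ⟨0, hL⟩)) h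
    rw [hPdef] at hc
    rw [MvPolynomial.coeff_sum] at hc
    simp only [MvPolynomial.coeff_monomial, MvPolynomial.coeff_zero] at hc
    rw [Finset.sum_eq_single_of_mem ⟨0, hL⟩ (Finset.mem_univ _)] at hc
    · simp at hc
    · intro i _ hi
      rw [if_neg (hne i hi)]
  set Q : MvPolynomial σ K := P * ∏ x : σ, MvPolynomial.X x with hQdef
  have hprodX : (∏ x : σ, (MvPolynomial.X x : MvPolynomial σ K)) ≠ 0 := by
    apply Finset.prod_ne_zero_iff.2
    intro x _
    exact MvPolynomial.X_ne_zero x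
  have hQ0 : Q ≠ 0 := mul_ne_zero hP0 hprodX
  have hQdeg : Q ∈ MvPolynomial.restrictDegree σ K (Fintype.card K - 1) := by
    rw [MvPolynomial.mem_restrictDegree_iff_sup]
    intro x
    rw [← MvPolynomial.degreeOf_def]
    have h1 : MvPolynomial.degreeOf x P ≤ 2 := by
      refine le_trans (MvPolynomial.degreeOf_sum_le x _ _) ?_
      apply Finset.sup_le
      intro i _
      rw [MvPolynomial.degreeOf_monomial_eq _ _ (one_ne_zero)]
      exact hle2 i x
    have h2 : MvPolynomial.degreeOf x (∏ y : σ, (MvPolynomial.X y : MvPolynomial σ K)) ≤ 1 := by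
      refine le_trans (MvPolynomial.degreeOf_prod_le x _ _) ?_
      have hXy : ∀ y : σ, MvPolynomial.degreeOf x (MvPolynomial.X y : MvPolynomial σ K)
          = if x = y then 1 else 0 := fun y => MvPolynomial.degreeOf_X x y
      refine le_of_eq ?_
      simp_rw [hXy]
      simp
    calc MvPolynomial.degreeOf x Q
        ≤ MvPolynomial.degreeOf x P +
          MvPolynomial.degreeOf x (∏ y : σ, (MvPolynomial.X y : MvPolynomial σ K)) :=
          MvPolynomial.degreeOf_mul_le x _ _
      _ ≤ 2 + 1 := Nat.add_le_add h1 h2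
      _ ≤ Fintype.card K - 1 := by rw [hcard]; omega
  -- rename to `Fin m` so that the variable type and `K` live in the same universe
  obtain ⟨v, hv⟩ : ∃ v : σ → K, MvPolynomial.eval v Q ≠ 0 := by
    let e := Fintype.equivFin σ
    set Q' : MvPolynomial (Fin m) K := MvPolynomial.rename (fun x => (e x).cast hm) Q with hQ'
    have hinj : Function.Injective (fun x : σ => (e x).cast hm) := by
      intro a b hab
      apply e.injective
      exact Fin.cast_injective _ hab
    have hQ'0 : Q' ≠ 0 := fun h =>
      hQ0 (MvPolynomial.rename_injective _ hinj (by simpa [hQ'] using h))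
    have hQ'deg : Q' ∈ MvPolynomial.restrictDegree (Fin m) K (Fintype.card K - 1) := by
      rw [MvPolynomial.mem_restrictDegree_iff_sup]
      intro i
      rw [← MvPolynomial.degreeOf_def]
      have : i = (fun x : σ => (e x).cast hm) (e.symm ((Fin.cast hm.symm) i)) := by
        simp [Fin.ext_iff]
      rw [this, MvPolynomial.degreeOf_rename_of_injective hinj]
      have := hQdeg
      rw [MvPolynomial.mem_restrictDegree_iff_sup] at this
      rw [MvPolynomial.degreeOf_def]
      exact this _
    by_contra h
    push_neg at h
    have hall : ∀ v' : Fin m → K, MvPolynomial.eval v' Q' = 0 := by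
      intro v'
      rw [hQ', MvPolynomial.eval_rename]
      exact h _
    exact hQ'0 (MvPolynomial.eq_zero_of_eval_eq_zero (Fin m) K Q' hall hQ'deg)
  rw [hQdef, map_mul, map_prod] at hv
  simp only [MvPolynomial.eval_X] at hv
  refine ⟨v, ?_, ?_⟩
  · intro x
    have := right_ne_zero_of_mul hv
    exact fun hx => this (Finset.prod_eq_zero (Finset.mem_univ x) hx)
  · exact left_ne_zero_of_mul hv
end
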